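/- arXiv:math/0511342 — 2 statements merged into one kernel-verified Lean document; each statement's English description precedes it below -/
import Mathlib

section
/- Existence of AZD for pseudoeffective line bundles (key step): let L be a pseudoeffective line bundle on a compact complex manifold X with fixed smooth metric h₀, and let E be the set of lower semicontinuous singular hermitian metrics h on L with positive curvature current and h/h₀ ≥ 1. Then the pointwise infimum metric h_L := h₀ · (inf_{h∈E} h/h₀), after upper semicontinuous regularization of its weight, is a singular hermitian metric on L with semipositive curvature current. -/
open Filter

/-- Plurisubharmonicity: upper semicontinuity plus the maximum principle
against real parts of holomorphic polynomials on closed discs of complex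
lines. -/
def PSHOn {E : Type*} [NormedAddCommGroup E] [NormedSpace ℂ E]
    (f : E → EReal) (Ω : Set E) : Prop :=
  UpperSemicontinuousOn f Ω ∧
    ∀ a b : E, (∀ z : ℂ, ‖z‖ ≤ 1 → a + z • b ∈ Ω) →
      ∀ p : Polynomial ℂ,
        (∀ z : ℂ, ‖z‖ = 1 → f (a + z • b) ≤ (((p.eval z).re : ℝ) : EReal)) →
        ∀ z : ℂ, ‖z‖ ≤ 1 → f (a + z • b) ≤ (((p.eval z).re : ℝ) : EReal)

/-- **Existence of an AZD for a pseudoeffective line bundle (key step), in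
local weight form.**  A candidate metric `h ∈ E` (lower semicontinuous,
positive curvature current, `h/h₀ ≥ 1`) corresponds, in a local trivialization
over an open `Ω ⊆ ℂⁿ`, to a plurisubharmonic weight `φ_t = -log(h/h₀) ≤ 0`;
pseudoeffectivity means the family is nonempty.  The metric
`h_L = h₀ · inf_{h ∈ E} h/h₀` corresponds to `ψ = sup_t φ_t`, and the claim is
that its upper semicontinuous regularization `ψ*` is a plurisubharmonic weight
(so `h_L` has semipositive curvature current), still a majorant of `ψ` and
still `≤ 0` (so `h_L/h₀ ≥ 1`, a genuine singular hermitian metric). -/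
theorem azd_regularized_inf_metric
    {n : ℕ} {T : Type*} [Nonempty T]
    (Ω : Set (Fin n → ℂ)) (hΩ : IsOpen Ω)
    (φ : T → (Fin n → ℂ) → EReal)
    (hpsh : ∀ t, PSHOn (φ t) Ω)
    (hle : ∀ t, ∀ x ∈ Ω, φ t x ≤ (0 : EReal)) :
    let ψ : (Fin n → ℂ) → EReal := fun x => ⨆ t, φ t x
    let ψs : (Fin n → ℂ) → EReal := fun x => limsup ψ (nhdsWithin x Ω)
    PSHOn ψs Ω ∧ ∀ x ∈ Ω, ψ x ≤ ψs x ∧ ψs x ≤ (0 : EReal) := by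
  intro ψ ψs
  -- basic facts
  have hψψs : ∀ x ∈ Ω, ψ x ≤ ψs x := by
    intro x hx
    have hpure : pure x ≤ nhdsWithin x Ω :=
      le_inf (pure_le_nhds x) (by simpa [Filter.pure_le_principal] using hx)
    have hp : ∀ᶠ y in (pure x : Filter (Fin n → ℂ)), ψ x ≤ ψ y := by simp
    have hfreq : ∃ᶠ y in nhdsWithin x Ω, ψ x ≤ ψ y :=
      (hp.frequently).filter_mono hpure
    exact le_limsup_of_frequently_le' hfreq
  have hneg : ∀ x ∈ Ω, ψs x ≤ (0 : EReal) := by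
    intro x hx
    refine limsup_le_of_le (by isBoundedDefault) ?_
    filter_upwards [self_mem_nhdsWithin] with y hy
    exact iSup_le fun t => hle t y hy
  -- upper semicontinuity of the regularization
  have husc : UpperSemicontinuousOn ψs Ω := by
    intro x hx c hc
    have hnx : nhdsWithin x Ω = nhds x := hΩ.nhdsWithin_eq hx
    have hc' : limsup ψ (nhds x) < c := by
      have h' : limsup ψ (nhdsWithin x Ω) < c := hc
      rwa [hnx] at h'
    obtain ⟨c', hc1, hc2⟩ := exists_between hc'
    have hev : ∀ᶠ y in nhds x, ψ y < c' := eventually_lt_of_limsup_lt hc1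
    obtain ⟨U, hU, hUopen, hxU⟩ := eventually_nhds_iff.1 hev
    refine Filter.Eventually.filter_mono nhdsWithin_le_nhds ?_
    filter_upwards [hUopen.mem_nhds hxU] with y hy
    have : ψs y ≤ c' := by
      refine limsup_le_of_le (by isBoundedDefault) ?_
      have : U ∈ nhdsWithin y Ω :=
        nhdsWithin_le_nhds (hUopen.mem_nhds hy)
      filter_upwards [this] with w hw
      exact (hU w hw).le
    exact lt_of_le_of_lt this hc2
  refine ⟨⟨husc, ?_⟩, fun x hx => ⟨hψψs x hx, hneg x hx⟩⟩
  -- maximum principle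
  intro a b hdisc p hbd z₀ hz₀
  have key : ∀ ε : ℝ, 0 < ε →
      ψs (a + z₀ • b) ≤ (((p.eval z₀).re + ε : ℝ) : EReal) := by
    intro ε hε
    -- eventually in a', translated discs stay in Ω and boundary bound holds
    have hcomp : IsCompact (Metric.closedBall (0 : ℂ) 1) := isCompact_closedBall 0 1
    have hF : Continuous fun q : (Fin n → ℂ) × ℂ => q.1 + q.2 • b := by
      exact continuous_fst.add (continuous_snd.smul continuous_const)
    have hEV : ∀ᶠ a' in nhds a, ∀ z ∈ Metric.closedBall (0 : ℂ) 1,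
        (a' + z • b ∈ Ω ∧ (‖z‖ = 1 →
          ψs (a' + z • b) < (((p.eval z).re + ε : ℝ) : EReal))) := by
      refine hcomp.eventually_forall_of_forall_eventually ?_
      intro z hz
      have hzΩ : a + z • b ∈ Ω := hdisc z (by simpa using hz)
      have hmem : ∀ᶠ q : (Fin n → ℂ) × ℂ in nhds (a, z), q.1 + q.2 • b ∈ Ω :=
        hF.continuousAt.eventually_mem (hΩ.mem_nhds hzΩ)
      rcases eq_or_lt_of_le (show ‖z‖ ≤ 1 by simpa using hz) with h1 | h1
      · -- boundary point
        have hb1 : ψs (a + z • b) < (((p.eval z).re + ε / 2 : ℝ) : EReal) :=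
          lt_of_le_of_lt (hbd z h1) (by exact_mod_cast (by linarith : (p.eval z).re < (p.eval z).re + ε / 2)
            )
        have husc' := husc _ hzΩ _ hb1
        rw [hΩ.nhdsWithin_eq hzΩ] at husc'
        have hevψ : ∀ᶠ q : (Fin n → ℂ) × ℂ in nhds (a, z),
            ψs (q.1 + q.2 • b) < (((p.eval z).re + ε / 2 : ℝ) : EReal) :=
          hF.continuousAt.tendsto.eventually (p := fun y => ψs y < (((p.eval z).re + ε / 2 : ℝ) : EReal)) husc'
        have hre : Continuous fun w : ℂ => (p.eval w).re :=
          (Complex.continuous_re.comp p.continuous_aeval)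
        have hevp : ∀ᶠ w : ℂ in nhds z, (p.eval z).re < (p.eval w).re + ε / 2 := by
          have : ContinuousAt (fun w : ℂ => (p.eval w).re) z := hre.continuousAt
          have := this.eventually_mem (show Set.Ioi ((p.eval z).re - ε / 2) ∈ nhds ((p.eval z).re)
            from Ioi_mem_nhds (by linarith))
          filter_upwards [this] with w hw
          have : (p.eval z).re - ε / 2 < (p.eval w).re := hw
          linarith
        have hevp' : ∀ᶠ q : (Fin n → ℂ) × ℂ in nhds (a, z),
            (p.eval z).re < (p.eval q.2).re + ε / 2 :=
          continuous_snd.continuousAt.eventually (p := fun w : ℂ => (p.eval z).re < (p.eval w).re + ε / 2) hevp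
        filter_upwards [hmem, hevψ, hevp'] with q h1 h2 h3
        refine ⟨h1, fun _ => lt_of_lt_of_le h2 ?_⟩
        exact_mod_cast (by linarith : (p.eval z).re + ε / 2 ≤ (p.eval q.2).re + ε)
      · -- interior point: the norm-one condition is eventually vacuous
        have : ∀ᶠ q : (Fin n → ℂ) × ℂ in nhds (a, z), ‖q.2‖ < 1 := by
          have : ContinuousAt (fun q : (Fin n → ℂ) × ℂ => ‖q.2‖) (a, z) :=
            (continuous_snd.norm).continuousAt
          exact this.eventually_mem (Iio_mem_nhds h1)
        filter_upwards [hmem, this] with q h1 h2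
        exact ⟨h1, fun h => (h2.ne h).elim⟩
    -- pass through the family and the maximum principle
    have hψbound : ∀ᶠ a' in nhds a, ψ (a' + z₀ • b) ≤ (((p.eval z₀).re + ε : ℝ) : EReal) := by
      filter_upwards [hEV] with a' hP
      refine iSup_le fun t => ?_
      have hdisc' : ∀ z : ℂ, ‖z‖ ≤ 1 → a' + z • b ∈ Ω := by
        intro z hz; exact (hP z (by simpa using hz)).1
      have hq : ∀ z : ℂ, ‖z‖ = 1 →
          φ t (a' + z • b) ≤ ((((p + Polynomial.C (ε : ℂ)).eval z).re : ℝ) : EReal) := by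
        intro z hz
        have hzΩ : a' + z • b ∈ Ω := hdisc' z hz.le
        have h1 : φ t (a' + z • b) ≤ ψ (a' + z • b) := le_iSup (fun t => φ t (a' + z • b)) t
        have h2 : ψ (a' + z • b) ≤ ψs (a' + z • b) := hψψs _ hzΩ
        have h3 := ((hP z (by simpa using hz.le)).2 hz).le
        have h4 : ((p + Polynomial.C (ε : ℂ)).eval z).re = (p.eval z).re + ε := by
          simp
        rw [h4]
        exact (h1.trans h2).trans h3
      have := (hpsh t).2 a' b hdisc' (p + Polynomial.C (ε : ℂ)) hq z₀ hz₀
      have h4 : ((p + Polynomial.C (ε : ℂ)).eval z₀).re = (p.eval z₀).re + ε := by simp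
      rw [h4] at this
      exact this
    -- transfer to a neighborhood of a + z₀ • b
    have hmap : Continuous fun y : Fin n → ℂ => y - z₀ • b := continuous_id.sub continuous_const
    have : ∀ᶠ y in nhds (a + z₀ • b), ψ y ≤ (((p.eval z₀).re + ε : ℝ) : EReal) := by
      have htd : Filter.Tendsto (fun y : Fin n → ℂ => y - z₀ • b) (nhds (a + z₀ • b)) (nhds a) := by
        have := hmap.tendsto (a + z₀ • b)
        simpa using this
      filter_upwards [htd.eventually hψbound] with y hy
      simpa using hy
    exact limsup_le_of_le (by isBoundedDefault)
      (Filter.Eventually.filter_mono nhdsWithin_le_nhds this)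
  -- let ε → 0
  have tend : Filter.Tendsto (fun ε : ℝ => (((p.eval z₀).re + ε : ℝ) : EReal))
      (nhdsWithin 0 (Set.Ioi 0)) (nhds (((p.eval z₀).re : ℝ) : EReal)) := by
    have hc : Continuous fun ε : ℝ => (((p.eval z₀).re + ε : ℝ) : EReal) :=
      continuous_coe_real_ereal.comp (continuous_const.add continuous_id)
    have := hc.tendsto (0 : ℝ)
    exact tendsto_nhdsWithin_of_tendsto_nhds (by simpa using this)
  exact ge_of_tendsto tend (eventually_nhdsWithin_of_forall fun ε hε => key ε hε)
end

section
/- Semipositivity of direct image in dimension-zero base model: let φ(z,t) be plurisubharmonic on Ω × U ⊆ ℂⁿ × ℂ, and for each t let ‖f‖²_t = ∫_Ω e^{-φ(·,t)} |f|². If f is a fixed holomorphic function on Ω with 0 < ‖f‖_t < ∞ for all t, then t ↦ -log ‖f‖²_t need not be subharmonic, but t ↦ log K(z,t) is plurisubharmonic in (z,t), where K(z,t) is the Bergman kernel of A²(Ω, e^{-φ(·,t)}) — equivalently, the metric h_B := 1/K(z,t) on the trivial adjoint bundle has semipositive curvature current (Berndtsson's theorem, product case, n=1, Ω the unit disk,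 φ of the form φ(z,t)=c|z|²+Re(t z) as a verifiable special case). -/
open MeasureTheory
open scoped ENNReal

/-- The (diagonal) weighted Bergman kernel
`K_D(p) = sup { |f(p)|² : f ∈ O(D), ∫_D e^{-φ} |f|² ≤ 1 }`. -/
noncomputable def bker {E : Type*} [NormedAddCommGroup E] [NormedSpace ℂ E]
    [MeasureSpace E] (D : Set E) (φ : E → ℝ) (p : E) : ℝ≥0∞ :=
  ⨆ f : {f : E → ℂ // DifferentiableOn ℂ f D ∧
      (∫⁻ z in D, ENNReal.ofReal (Real.exp (-φ z)) * ((‖f z‖₊ : ℝ≥0∞)) ^ 2) ≤ 1},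
    ((‖f.1 p‖₊ : ℝ≥0∞)) ^ 2

open Metric Set Complex Real
open scoped Real

noncomputable section BerndtssonAux

private def DD : Set ℂ := Metric.ball 0 1

private def wt (c : ℝ) (t : ℂ) (z : ℂ) : ℝ := c * ‖z‖ ^ 2 + (t * z).re

private lemma enn_norm_sq (x : ℂ) :
    ((‖x‖₊ : ℝ≥0∞)) ^ 2 = ENNReal.ofReal (‖x‖ ^ 2) := by
  rw [ENNReal.ofReal_pow (norm_nonneg _), ← coe_nnnorm, ENNReal.ofReal_coe_nnreal]

private lemma norm_sq_mul_exp (f : ℂ → ℂ) (a : ℂ) (w : ℂ) :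
    ‖f w * Complex.exp a‖ ^ 2 = ‖f w‖ ^ 2 * Real.exp (2 * a.re) := by
  rw [norm_mul, mul_pow, Complex.norm_exp,
    ← Real.exp_nat_mul]
  ring_nf

private lemma integral_transform (c : ℝ) (t : ℂ) (f : ℂ → ℂ) :
    (∫⁻ w in DD, ENNReal.ofReal (Real.exp (-(wt c 0 w))) *
      ((‖f w * Complex.exp (-(t * w) / 2)‖₊ : ℝ≥0∞)) ^ 2)
    = ∫⁻ w in DD, ENNReal.ofReal (Real.exp (-(wt c t w))) *
      ((‖f w‖₊ : ℝ≥0∞)) ^ 2 := by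
  refine lintegral_congr fun w => ?_
  rw [enn_norm_sq, enn_norm_sq, norm_sq_mul_exp,
    ← ENNReal.ofReal_mul (Real.exp_pos _).le, ← ENNReal.ofReal_mul (Real.exp_pos _).le]
  congr 1
  have h1 : (-(t * w) / 2).re = -(t * w).re / 2 := by simp
  rw [h1, mul_comm (‖f w‖ ^ 2), ← mul_assoc, ← Real.exp_add]
  have h2 : -wt c 0 w + 2 * (-(t * w).re / 2) = -wt c t w := by
    simp only [wt, zero_mul, Complex.zero_re]
    ring
  rw [h2]

private lemma diff_exp_aux (a : ℂ) :
    Differentiable ℂ fun w : ℂ => Complex.exp (a * w) :=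
  Complex.differentiable_exp.comp ((differentiable_const a).mul differentiable_id)

private lemma bker_transform (c : ℝ) (t z : ℂ) :
    bker DD (wt c t) z = ENNReal.ofReal (Real.exp ((t * z).re)) * bker DD (wt c 0) z := by
  rw [bker, bker, ENNReal.mul_iSup]
  apply le_antisymm
  · refine iSup_le fun f => ?_
    have hgd : DifferentiableOn ℂ (fun w => f.1 w * Complex.exp (-(t * w) / 2)) DD := by
      refine f.2.1.mul (Differentiable.differentiableOn ?_)
      have : (fun w : ℂ => Complex.exp (-(t * w) / 2)) = fun w => Complex.exp ((-t/2) * w) := by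
        funext w; ring_nf
      rw [this]; exact diff_exp_aux _
    have hgi := (integral_transform c t f.1).le.trans f.2.2
    refine le_iSup_of_le ⟨_, hgd, hgi⟩ (le_of_eq ?_)
    rw [enn_norm_sq, enn_norm_sq, norm_sq_mul_exp,
      ← ENNReal.ofReal_mul (Real.exp_pos _).le]
    congr 1
    have h1 : (-(t * z) / 2).re = -(t * z).re / 2 := by simp
    have h2 : (t * z).re + 2 * (-(t * z).re / 2) = 0 := by ring
    rw [h1, mul_comm (rexp _), mul_assoc, ← Real.exp_add,
      show 2 * (-(t * z).re / 2) + (t * z).re = 0 by ring, Real.exp_zero, mul_one]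
  · refine iSup_le fun g => ?_
    have hfd : DifferentiableOn ℂ (fun w => g.1 w * Complex.exp (t * w / 2)) DD := by
      refine g.2.1.mul (Differentiable.differentiableOn ?_)
      have : (fun w : ℂ => Complex.exp (t * w / 2)) = fun w => Complex.exp ((t/2) * w) := by
        funext w; ring_nf
      rw [this]; exact diff_exp_aux _
    have hcancel : ∀ w, (g.1 w * Complex.exp (t * w / 2)) * Complex.exp (-(t * w) / 2) = g.1 w := by
      intro w
      rw [mul_assoc, ← Complex.exp_add]
      have : t * w / 2 + -(t * w) / 2 = 0 := by ring
      rw [this, Complex.exp_zero, mul_one]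
    have hfi : (∫⁻ w in DD, ENNReal.ofReal (Real.exp (-(wt c t w))) *
        ((‖g.1 w * Complex.exp (t * w / 2)‖₊ : ℝ≥0∞)) ^ 2) ≤ 1 := by
      rw [← integral_transform c t]
      calc (∫⁻ w in DD, ENNReal.ofReal (Real.exp (-(wt c 0 w))) *
            ((‖(g.1 w * Complex.exp (t * w / 2)) * Complex.exp (-(t * w) / 2)‖₊ : ℝ≥0∞)) ^ 2)
          = ∫⁻ w in DD, ENNReal.ofReal (Real.exp (-(wt c 0 w))) * ((‖g.1 w‖₊ : ℝ≥0∞)) ^ 2 := by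
            refine lintegral_congr fun w => by rw [hcancel]
        _ ≤ 1 := g.2.2
    refine le_iSup_of_le ⟨_, hfd, hfi⟩ (le_of_eq ?_)
    rw [enn_norm_sq, enn_norm_sq, norm_sq_mul_exp,
      ← ENNReal.ofReal_mul (Real.exp_pos _).le]
    congr 1
    have h1 : (t * z / 2).re = (t * z).re / 2 := by simp
    rw [h1, show 2 * ((t * z).re / 2) = (t * z).re by ring, mul_comm]

private lemma bker_pos (c : ℝ) (hc : 0 ≤ c) (z : ℂ) : 0 < bker DD (wt c 0) z := by
  set V : ℝ≥0∞ := volume DD with hV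
  have hVne : V ≠ ∞ := (measure_ball_lt_top).ne
  set ε : ℝ := Real.sqrt ((V.toReal + 1)⁻¹) with hε
  have hVpos : (0:ℝ) < V.toReal + 1 := by positivity
  have hεpos : 0 < ε := Real.sqrt_pos.mpr (by positivity)
  have hεsq : ε ^ 2 = (V.toReal + 1)⁻¹ := Real.sq_sqrt (by positivity)
  have hint : (∫⁻ w in DD, ENNReal.ofReal (Real.exp (-(wt c 0 w))) *
      ((‖(fun _ : ℂ => (ε:ℂ)) w‖₊ : ℝ≥0∞)) ^ 2) ≤ 1 := by
    have hbound : ∀ w : ℂ, ENNReal.ofReal (Real.exp (-(wt c 0 w))) *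
        ((‖(ε:ℂ)‖₊ : ℝ≥0∞)) ^ 2 ≤ ENNReal.ofReal (ε ^ 2) := by
      intro w
      have h1 : Real.exp (-(wt c 0 w)) ≤ 1 := by
        rw [Real.exp_le_one_iff]
        simp only [wt, zero_mul, Complex.zero_re, add_zero]
        · nlinarith [sq_nonneg ‖w‖]
      calc ENNReal.ofReal (Real.exp (-(wt c 0 w))) * ((‖(ε:ℂ)‖₊ : ℝ≥0∞)) ^ 2
          ≤ 1 * ((‖(ε:ℂ)‖₊ : ℝ≥0∞)) ^ 2 := by
            gcongr
            exact_mod_cast ENNReal.ofReal_le_one.mpr h1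
        _ = ENNReal.ofReal (ε ^ 2) := by
            rw [one_mul, enn_norm_sq]
            congr 1
            rw [Complex.norm_real, Real.norm_eq_abs, abs_of_pos hεpos]
    calc (∫⁻ w in DD, ENNReal.ofReal (Real.exp (-(wt c 0 w))) *
          ((‖(fun _ : ℂ => (ε:ℂ)) w‖₊ : ℝ≥0∞)) ^ 2)
        ≤ ∫⁻ _ in DD, ENNReal.ofReal (ε ^ 2) := lintegral_mono fun w => hbound w
      _ = ENNReal.ofReal (ε ^ 2) * V := by rw [setLIntegral_const]
      _ ≤ 1 := by
          rw [hεsq, ENNReal.ofReal_inv_of_pos hVpos, ENNReal.ofReal_add ENNReal.toReal_nonneg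
            zero_le_one, ENNReal.ofReal_toReal hVne, ENNReal.ofReal_one]
          rw [← ENNReal.div_eq_inv_mul]
          exact ENNReal.div_le_of_le_mul (by simpa using le_self_add)
  rw [bker]
  refine lt_of_lt_of_le ?_ (le_iSup _ ⟨fun _ => (ε:ℂ), differentiableOn_const _, hint⟩)
  rw [enn_norm_sq]
  refine ENNReal.ofReal_pos.mpr ?_
  have : ‖((ε:ℝ):ℂ)‖ = ε := by
    rw [Complex.norm_real, Real.norm_eq_abs, abs_of_pos hεpos]
  rw [this]
  positivity

private lemma circ_bound {f : ℂ → ℂ} {z₀ : ℂ} {r s : ℝ} (hs : 0 < s) (hsr : s ≤ r)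
    (hd : DifferentiableOn ℂ f (closedBall z₀ r)) :
    2 * π * ‖f z₀‖ ^ 2 ≤ ∫ θ in (0:ℝ)..(2*π), ‖f (circleMap z₀ s θ)‖ ^ 2 := by
  set h : ℂ → ℂ := fun w => f w * f w with hh
  have hd2 : DifferentiableOn ℂ h (closedBall z₀ s) :=
    (hd.mul hd).mono (closedBall_subset_closedBall hsr)
  have key := hd2.circleIntegral_sub_inv_smul (mem_ball_self hs)
  have hunfold : (∮ ζ in C(z₀, s), (ζ - z₀)⁻¹ • h ζ)
      = Complex.I • ∫ θ in (0:ℝ)..(2*π), h (circleMap z₀ s θ) := by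
    rw [circleIntegral, ← intervalIntegral.integral_smul]
    refine intervalIntegral.integral_congr fun θ _ => ?_
    rw [deriv_circleMap, circleMap_sub_center, smul_smul]
    have hne : circleMap 0 s θ ≠ 0 := by
      simpa using circleMap_ne_center (c := (0:ℂ)) hs.ne' (θ := θ)
    field_simp
  have hX : (∫ θ in (0:ℝ)..(2*π), h (circleMap z₀ s θ)) = ((2*π : ℝ) : ℂ) * h z₀ := by
    have := key
    rw [hunfold] at this
    have h2 : (2 * ↑π * Complex.I : ℂ) • h z₀ = Complex.I • (((2*π : ℝ) : ℂ) * h z₀) := by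
      simp only [smul_eq_mul]
      push_cast
      ring
    rw [h2] at this
    simp only [smul_eq_mul] at this
    exact mul_left_cancel₀ Complex.I_ne_zero this
  have hnorm : ‖((2*π : ℝ) : ℂ) * h z₀‖ = 2 * π * ‖f z₀‖ ^ 2 := by
    rw [norm_mul, norm_mul, Complex.norm_real, Real.norm_eq_abs,
      abs_of_pos (by positivity : (0:ℝ) < 2*π), sq]
  calc 2 * π * ‖f z₀‖ ^ 2 = ‖((2*π : ℝ) : ℂ) * h z₀‖ := hnorm.symm
    _ = ‖∫ θ in (0:ℝ)..(2*π), h (circleMap z₀ s θ)‖ := by rw [hX]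
    _ ≤ ∫ θ in (0:ℝ)..(2*π), ‖h (circleMap z₀ s θ)‖ :=
        intervalIntegral.norm_integral_le_integral_norm (by positivity)
    _ = ∫ θ in (0:ℝ)..(2*π), ‖f (circleMap z₀ s θ)‖ ^ 2 := by
        refine intervalIntegral.integral_congr fun θ _ => ?_
        rw [norm_mul, sq]

private lemma circ_bound' {f : ℂ → ℂ} {z₀ : ℂ} {r s : ℝ} (hs : 0 < s) (hsr : s ≤ r)
    (hd : DifferentiableOn ℂ f (closedBall z₀ r)) :
    2 * π * ‖f z₀‖ ^ 2 ≤ ∫ θ in Ioo (-π) π, ‖f (circleMap z₀ s θ)‖ ^ 2 := by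
  have hper : Function.Periodic (fun θ => ‖f (circleMap z₀ s θ)‖ ^ 2) (2*π) := by
    intro θ
    simp [periodic_circleMap z₀ s θ]
  have h1 := hper.intervalIntegral_add_eq (-π) 0
  have h2 : -π + 2*π = π := by ring
  have h3 : (0:ℝ) + 2*π = 2*π := by ring
  rw [h2, h3] at h1
  calc 2 * π * ‖f z₀‖ ^ 2 ≤ ∫ θ in (0:ℝ)..(2*π), ‖f (circleMap z₀ s θ)‖ ^ 2 :=
        circ_bound hs hsr hd
    _ = ∫ θ in (-π:ℝ)..π, ‖f (circleMap z₀ s θ)‖ ^ 2 := h1.symm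
    _ = ∫ θ in Ioc (-π) π, ‖f (circleMap z₀ s θ)‖ ^ 2 :=
        intervalIntegral.integral_of_le (by linarith [Real.pi_pos])
    _ = ∫ θ in Ioo (-π) π, ‖f (circleMap z₀ s θ)‖ ^ 2 := integral_Ioc_eq_integral_Ioo

private lemma csymm_cont : Continuous fun p : ℝ × ℝ => Complex.polarCoord.symm p := by
  simp_rw [Complex.polarCoord_symm_apply]
  fun_prop

private lemma csymm_circle (z₀ : ℂ) (s θ : ℝ) :
    z₀ + Complex.polarCoord.symm (s, θ) = circleMap z₀ s θ := by
  rw [Complex.polarCoord_symm_apply, circleMap, Complex.exp_mul_I, Complex.ofReal_cos,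
    Complex.ofReal_sin]

private lemma meanvalue {f : ℂ → ℂ} {z₀ : ℂ} {r : ℝ} (hr : 0 < r)
    (hd : DifferentiableOn ℂ f (closedBall z₀ r)) :
    ‖f z₀‖ ^ 2 * (π * r ^ 2) ≤ ∫ w in ball z₀ r, ‖f w‖ ^ 2 := by
  have hcont : ContinuousOn f (closedBall z₀ r) := hd.continuousOn
  set S : Set (ℝ × ℝ) := Ioo 0 r ×ˢ Ioo (-π) π with hS
  set F : ℝ × ℝ → ℝ := fun p => p.1 * ‖f (z₀ + Complex.polarCoord.symm p)‖ ^ 2 with hF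
  -- continuity of F on the compact rectangle
  have hmaps : MapsTo (fun p : ℝ × ℝ => z₀ + Complex.polarCoord.symm p)
      (Icc 0 r ×ˢ Icc (-π) π) (closedBall z₀ r) := by
    intro p hp
    have : dist (z₀ + Complex.polarCoord.symm p) z₀ = ‖Complex.polarCoord.symm p‖ := by
      rw [dist_eq_norm]
      simp
    rw [mem_closedBall, this, Complex.norm_polarCoord_symm,
      _root_.abs_of_nonneg hp.1.1]
    exact hp.1.2
  have hFc : ContinuousOn F (Icc 0 r ×ˢ Icc (-π) π) := by
    refine ContinuousOn.mul (continuous_fst.continuousOn) ?_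
    refine ContinuousOn.pow ?_ 2
    refine ContinuousOn.norm ?_
    exact hcont.comp ((continuous_const.add csymm_cont).continuousOn) hmaps
  have hFi : IntegrableOn F S := by
    refine (hFc.integrableOn_compact (isCompact_Icc.prod isCompact_Icc)).mono_set ?_
    exact prod_mono Ioo_subset_Icc_self Ioo_subset_Icc_self
  -- the polar-coordinate identity
  have hid : ∫ w in ball z₀ r, ‖f w‖ ^ 2 = ∫ p in S, F p := by
    have e1 : ∫ w in ball z₀ r, ‖f w‖ ^ 2
        = ∫ w, (ball (0:ℂ) r).indicator (fun w => ‖f (z₀ + w)‖ ^ 2) w := by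
      rw [← integral_indicator measurableSet_ball]
      rw [← integral_add_left_eq_self
        (fun w => (ball z₀ r).indicator (fun w => ‖f w‖ ^ 2) w) z₀]
      congr 1
      funext w
      by_cases hw : w ∈ ball (0:ℂ) r
      · have hw' : z₀ + w ∈ ball z₀ r := by
          rw [mem_ball, dist_eq_norm] at hw ⊢
          simpa using hw
        rw [indicator_of_mem hw' _, indicator_of_mem hw _]
      · have hw' : z₀ + w ∉ ball z₀ r := by
          rw [mem_ball, dist_eq_norm] at hw ⊢
          simpa using hw
        rw [indicator_of_notMem hw' _, indicator_of_notMem hw _]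
    have e2 := Complex.integral_comp_polarCoord_symm
      (fun w => (ball (0:ℂ) r).indicator (fun w => ‖f (z₀ + w)‖ ^ 2) w)
    rw [e1, ← e2]
    have e3 : ∀ p ∈ polarCoord.target,
        p.1 • (ball (0:ℂ) r).indicator (fun w => ‖f (z₀ + w)‖ ^ 2) (Complex.polarCoord.symm p)
        = S.indicator F p := by
      intro p hp
      have hp1 : 0 < p.1 := hp.1
      by_cases hpr : p.1 < r
      · have hmem : Complex.polarCoord.symm p ∈ ball (0:ℂ) r := by
          rw [mem_ball, dist_eq_norm, sub_zero,
            Complex.norm_polarCoord_symm, abs_of_pos hp1]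
          exact hpr
        have hmemS : p ∈ S := ⟨⟨hp1, hpr⟩, hp.2⟩
        rw [indicator_of_mem hmem, indicator_of_mem hmemS]
        simp [F, smul_eq_mul]
      · have hmem : Complex.polarCoord.symm p ∉ ball (0:ℂ) r := by
          rw [mem_ball, dist_eq_norm, sub_zero,
            Complex.norm_polarCoord_symm, abs_of_pos hp1]
          exact hpr
        have hmemS : p ∉ S := fun hmemS => hpr hmemS.1.2
        rw [indicator_of_notMem hmem, indicator_of_notMem hmemS, smul_zero]
    rw [setIntegral_congr_fun (by exact (isOpen_Ioi.prod isOpen_Ioo).measurableSet) e3]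
    rw [setIntegral_indicator (by exact (isOpen_Ioo.prod isOpen_Ioo).measurableSet)]
    congr 1
    rw [inter_eq_self_of_subset_right]
    exact prod_mono Ioo_subset_Ioi_self (subset_refl _)
  have hFi' : IntegrableOn F S ((volume : Measure ℝ).prod volume) := by
    rwa [← Measure.volume_eq_prod]
  have hfub : ∫ p in S, F p = ∫ s in Ioo 0 r, ∫ θ in Ioo (-π) π, F (s, θ) := by
    rw [Measure.volume_eq_prod]
    exact setIntegral_prod F hFi'
  have hmarg : IntegrableOn (fun s => ∫ θ in Ioo (-π) π, F (s, θ)) (Ioo 0 r) := by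
    have h := hFi'
    rw [IntegrableOn, hS, ← Measure.prod_restrict] at h
    exact h.integral_prod_left
  have hinner : ∀ s ∈ Ioo (0:ℝ) r, s * (2 * π * ‖f z₀‖ ^ 2) ≤ ∫ θ in Ioo (-π) π, F (s, θ) := by
    intro s hs
    calc s * (2 * π * ‖f z₀‖ ^ 2)
        ≤ s * ∫ θ in Ioo (-π) π, ‖f (circleMap z₀ s θ)‖ ^ 2 :=
          mul_le_mul_of_nonneg_left (circ_bound' hs.1 hs.2.le hd) hs.1.le
      _ = ∫ θ in Ioo (-π) π, F (s, θ) := by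
          rw [← integral_const_mul]
          refine setIntegral_congr_fun measurableSet_Ioo (fun θ _ => ?_)
          rw [hF]
          simp only
          rw [csymm_circle]
  have houter : ∫ s in Ioo 0 r, s * (2 * π * ‖f z₀‖ ^ 2)
      ≤ ∫ s in Ioo 0 r, ∫ θ in Ioo (-π) π, F (s, θ) := by
    refine setIntegral_mono_on ?_ hmarg measurableSet_Ioo hinner
    exact ((continuous_id.mul continuous_const).integrableOn_Icc (a := 0) (b := r)).mono_set
      Ioo_subset_Icc_self
  have hval : ∫ s in Ioo 0 r, s * (2 * π * ‖f z₀‖ ^ 2) = ‖f z₀‖ ^ 2 * (π * r ^ 2) := by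
    have hint : ∫ s in Ioo (0:ℝ) r, s = r ^ 2 / 2 := by
      rw [← integral_Ioc_eq_integral_Ioo, ← intervalIntegral.integral_of_le hr.le,
        integral_id]
      ring
    rw [integral_mul_const, hint]
    ring
  calc ‖f z₀‖ ^ 2 * (π * r ^ 2) = ∫ s in Ioo 0 r, s * (2 * π * ‖f z₀‖ ^ 2) := hval.symm
    _ ≤ ∫ s in Ioo 0 r, ∫ θ in Ioo (-π) π, F (s, θ) := houter
    _ = ∫ p in S, F p := hfub.symm
    _ = ∫ w in ball z₀ r, ‖f w‖ ^ 2 := hid.symm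

private lemma wt_le (c : ℝ) (hc : 0 ≤ c) (t : ℂ) {w : ℂ} (hw : ‖w‖ ≤ 1) :
    wt c t w ≤ c + ‖t‖ := by
  have h1 : (t * w).re ≤ ‖t‖ := by
    calc (t * w).re ≤ ‖t * w‖ := Complex.re_le_norm _
      _ = ‖t‖ * ‖w‖ := by rw [norm_mul]
      _ ≤ ‖t‖ * 1 := by gcongr
      _ = ‖t‖ := mul_one _
  have h2 : c * ‖w‖ ^ 2 ≤ c := by
    have hsq : ‖w‖ ^ 2 ≤ 1 := by nlinarith [norm_nonneg w]
    calc c * ‖w‖ ^ 2 ≤ c * 1 := by gcongr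
      _ = c := mul_one c
  simpa [wt] using add_le_add h2 h1

private lemma pointwise_bound (c : ℝ) (hc : 0 ≤ c) (t : ℂ) {f : ℂ → ℂ}
    (hfd : DifferentiableOn ℂ f DD)
    (hfi : (∫⁻ w in DD, ENNReal.ofReal (Real.exp (-(wt c t w))) * ((‖f w‖₊:ℝ≥0∞))^2) ≤ 1)
    {z : ℂ} (hz : ‖z‖ < 1) :
    ‖f z‖ ^ 2 ≤ Real.exp (c + ‖t‖) / (π * ((1 - ‖z‖)/2) ^ 2) := by
  set r : ℝ := (1 - ‖z‖)/2 with hrdef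
  have hr : 0 < r := by simp only [hrdef]; linarith
  have hsub : closedBall z r ⊆ DD := by
    intro w hw
    rw [mem_closedBall, dist_eq_norm] at hw
    have : ‖w‖ ≤ ‖w - z‖ + ‖z‖ := by
      simpa using norm_add_le (w - z) z
    simp only [DD, mem_ball, dist_zero_right]
    simp only [hrdef] at hw
    linarith
  have hd' : DifferentiableOn ℂ f (closedBall z r) := hfd.mono hsub
  have hmv := meanvalue hr hd'
  -- bound the L² integral over the small ball
  have hm : ∀ w ∈ DD, ENNReal.ofReal (Real.exp (-(c + ‖t‖)))
      ≤ ENNReal.ofReal (Real.exp (-(wt c t w))) := by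
    intro w hw
    have hw1 : ‖w‖ ≤ 1 := by
      simp only [DD, mem_ball, dist_zero_right] at hw
      exact hw.le
    exact ENNReal.ofReal_le_ofReal (Real.exp_le_exp.mpr (by linarith [wt_le c hc t hw1]))
  have hL : (∫⁻ w in ball z r, ((‖f w‖₊:ℝ≥0∞))^2)
      ≤ ENNReal.ofReal (Real.exp (c + ‖t‖)) := by
    have h1 : ENNReal.ofReal (Real.exp (-(c + ‖t‖))) * (∫⁻ w in ball z r, ((‖f w‖₊:ℝ≥0∞))^2)
        ≤ 1 := by
      rw [← lintegral_const_mul' _ _ ENNReal.ofReal_ne_top]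
      calc (∫⁻ w in ball z r, ENNReal.ofReal (Real.exp (-(c + ‖t‖))) * ((‖f w‖₊:ℝ≥0∞))^2)
          ≤ ∫⁻ w in ball z r, ENNReal.ofReal (Real.exp (-(wt c t w))) * ((‖f w‖₊:ℝ≥0∞))^2 := by
            refine lintegral_mono_ae ((ae_restrict_iff' measurableSet_ball).mpr
              (ae_of_all _ fun w hw => ?_))
            exact mul_le_mul_left (hm w (hsub (ball_subset_closedBall hw))) _
        _ ≤ ∫⁻ w in DD, ENNReal.ofReal (Real.exp (-(wt c t w))) * ((‖f w‖₊:ℝ≥0∞))^2 :=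
            lintegral_mono_set (fun w hw => hsub (ball_subset_closedBall hw))
        _ ≤ 1 := hfi
    have hne : ENNReal.ofReal (Real.exp (-(c + ‖t‖))) ≠ 0 :=
      (ENNReal.ofReal_pos.mpr (Real.exp_pos _)).ne'
    have := mul_le_mul_right h1 (ENNReal.ofReal (Real.exp (-(c + ‖t‖))))⁻¹
    rw [← mul_assoc, ENNReal.inv_mul_cancel hne ENNReal.ofReal_ne_top, one_mul, mul_one] at this
    calc (∫⁻ w in ball z r, ((‖f w‖₊:ℝ≥0∞))^2) ≤ (ENNReal.ofReal (Real.exp (-(c + ‖t‖))))⁻¹ :=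
          this
      _ = ENNReal.ofReal (Real.exp (c + ‖t‖)) := by
          rw [← ENNReal.ofReal_inv_of_pos (Real.exp_pos _), ← Real.exp_neg, neg_neg]
  have hreal : (∫ w in ball z r, ‖f w‖ ^ 2) ≤ Real.exp (c + ‖t‖) := by
    have hcont : ContinuousOn (fun w => ‖f w‖ ^ 2) (ball z r) :=
      ((hd'.continuousOn.mono ball_subset_closedBall).norm.pow 2)
    have heq : (∫ w in ball z r, ‖f w‖ ^ 2)
        = (∫⁻ w in ball z r, ENNReal.ofReal (‖f w‖ ^ 2)).toReal := by
      rw [integral_eq_lintegral_of_nonneg_ae]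
      · filter_upwards [] with w using by positivity
      · exact hcont.aestronglyMeasurable measurableSet_ball
    rw [heq]
    have : (∫⁻ w in ball z r, ENNReal.ofReal (‖f w‖ ^ 2))
        ≤ ENNReal.ofReal (Real.exp (c + ‖t‖)) := by
      calc (∫⁻ w in ball z r, ENNReal.ofReal (‖f w‖ ^ 2))
          = ∫⁻ w in ball z r, ((‖f w‖₊:ℝ≥0∞))^2 := by
            refine lintegral_congr fun w => (enn_norm_sq (f w)).symm
        _ ≤ _ := hL
    calc (∫⁻ w in ball z r, ENNReal.ofReal (‖f w‖ ^ 2)).toReal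
        ≤ (ENNReal.ofReal (Real.exp (c + ‖t‖))).toReal :=
          ENNReal.toReal_mono ENNReal.ofReal_ne_top this
      _ = Real.exp (c + ‖t‖) := ENNReal.toReal_ofReal (Real.exp_pos _).le
  have hpir : 0 < π * r ^ 2 := by positivity
  rw [le_div_iff₀ hpir]
  calc ‖f z‖ ^ 2 * (π * r ^ 2) ≤ ∫ w in ball z r, ‖f w‖ ^ 2 := hmv
    _ ≤ Real.exp (c + ‖t‖) := hreal

/-- uniform sup bound on `‖w‖ ≤ R`. -/
noncomputable def MM (c R : ℝ) : ℝ := Real.sqrt (Real.exp c / (π * ((1 - R)/2) ^ 2))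

private lemma unif_bound (c : ℝ) (hc : 0 ≤ c) {f : ℂ → ℂ}
    (hfd : DifferentiableOn ℂ f DD)
    (hfi : (∫⁻ w in DD, ENNReal.ofReal (Real.exp (-(wt c 0 w))) * ((‖f w‖₊:ℝ≥0∞))^2) ≤ 1)
    {R : ℝ} (hR : R < 1) {w : ℂ} (hw : ‖w‖ ≤ R) :
    ‖f w‖ ≤ MM c R := by
  have hw1 : ‖w‖ < 1 := lt_of_le_of_lt hw hR
  have h1 := pointwise_bound c hc 0 hfd hfi hw1
  rw [norm_zero, add_zero] at h1
  have h2 : Real.exp c / (π * ((1 - ‖w‖)/2) ^ 2) ≤ Real.exp c / (π * ((1 - R)/2) ^ 2) := by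
    have hgap : 0 < (1 - R)/2 := by linarith
    have hd1 : 0 < π * ((1 - R)/2) ^ 2 := by positivity
    have hd2 : π * ((1 - R)/2) ^ 2 ≤ π * ((1 - ‖w‖)/2) ^ 2 := by
      gcongr <;> linarith
    exact div_le_div_of_nonneg_left (Real.exp_pos c).le hd1 hd2
  have := le_trans h1 h2
  calc ‖f w‖ = Real.sqrt (‖f w‖ ^ 2) := (Real.sqrt_sq (norm_nonneg _)).symm
    _ ≤ MM c R := Real.sqrt_le_sqrt this

/-- Lipschitz constant for admissible functions on `‖·‖ ≤ R`. -/
noncomputable def LL (c R : ℝ) : ℝ := (1 + R)/2 * MM c ((1 + R)/2) / (((1 - R)/2) ^ 2)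

private lemma lip_bound (c : ℝ) (hc : 0 ≤ c) {f : ℂ → ℂ}
    (hfd : DifferentiableOn ℂ f DD)
    (hfi : (∫⁻ w in DD, ENNReal.ofReal (Real.exp (-(wt c 0 w))) * ((‖f w‖₊:ℝ≥0∞))^2) ≤ 1)
    {R : ℝ} (hR0 : 0 ≤ R) (hR : R < 1) {z w : ℂ} (hz : ‖z‖ ≤ R) (hw : ‖w‖ ≤ R) :
    ‖f z - f w‖ ≤ LL c R * ‖z - w‖ := by
  set R' : ℝ := (1 + R)/2 with hR'def
  have hRR' : R < R' := by simp only [hR'def]; linarith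
  have hR'1 : R' < 1 := by simp only [hR'def]; linarith
  have hR'0 : 0 < R' := by simp only [hR'def]; linarith
  have hgap : R' - R = (1 - R)/2 := by simp only [hR'def]; ring
  have hgap0 : 0 < R' - R := by linarith
  have hdc : DiffContOnCl ℂ f (ball 0 R') := by
    constructor
    · exact hfd.mono (ball_subset_ball hR'1.le)
    · exact hfd.continuousOn.mono (fun x hx => by
        have := closure_ball_subset_closedBall hx
        simp only [DD, mem_ball, dist_zero_right]
        rw [mem_closedBall, dist_zero_right] at this
        linarith)
  have hzb : z ∈ ball (0:ℂ) R' := by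
    rw [mem_ball, dist_zero_right]; linarith
  have hwb : w ∈ ball (0:ℂ) R' := by
    rw [mem_ball, dist_zero_right]; linarith
  have e1 := hdc.circleIntegral_sub_inv_smul hzb
  have e2 := hdc.circleIntegral_sub_inv_smul hwb
  have hsne : ∀ x : ℂ, ∀ ζ ∈ sphere (0:ℂ) R', ‖x‖ ≤ R → ζ - x ≠ 0 := by
    intro x ζ hζ hx
    rw [mem_sphere, dist_zero_right] at hζ
    intro hcontra
    rw [sub_eq_zero] at hcontra
    rw [hcontra] at hζ
    linarith [hζ ▸ hx]
  have hcont_sphere : ContinuousOn f (sphere (0:ℂ) R') := by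
    refine hfd.continuousOn.mono (fun x hx => ?_)
    rw [mem_sphere, dist_zero_right] at hx
    simp only [DD, mem_ball, dist_zero_right]
    linarith
  have hci : ∀ x : ℂ, ‖x‖ ≤ R → CircleIntegrable (fun ζ => (ζ - x)⁻¹ • f ζ) 0 R' := by
    intro x hx
    refine ContinuousOn.circleIntegrable hR'0.le ?_
    refine ContinuousOn.smul (ContinuousOn.inv₀ (f := fun ζ : ℂ => ζ - x) ?_ ?_) hcont_sphere
    · exact (continuousOn_id.sub continuousOn_const)
    · exact fun ζ hζ => hsne x ζ hζ hx
  have hsubint := circleIntegral.integral_sub (hci z hz) (hci w hw)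
  rw [e1, e2] at hsubint
  have hbound : ∀ ζ ∈ sphere (0:ℂ) R', ‖(ζ - z)⁻¹ • f ζ - (ζ - w)⁻¹ • f ζ‖
      ≤ MM c R' * ‖z - w‖ / ((R' - R) ^ 2) := by
    intro ζ hζ
    rw [mem_sphere, dist_zero_right] at hζ
    have hz' : ζ - z ≠ 0 := hsne z ζ (by rw [mem_sphere, dist_zero_right]; exact hζ) hz
    have hw' : ζ - w ≠ 0 := hsne w ζ (by rw [mem_sphere, dist_zero_right]; exact hζ) hw
    have hdist : ∀ x : ℂ, ‖x‖ ≤ R → R' - R ≤ ‖ζ - x‖ := by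
      intro x hx
      have h := norm_sub_norm_le ζ x
      linarith
    have hkey : (ζ - z)⁻¹ - (ζ - w)⁻¹ = (z - w) * ((ζ - z)⁻¹ * (ζ - w)⁻¹) := by
      field_simp
      ring
    have hfb : ‖f ζ‖ ≤ MM c R' :=
      unif_bound c hc hfd hfi hR'1 hζ.le
    have ha : ‖ζ - z‖⁻¹ ≤ (R' - R)⁻¹ := by
      apply inv_anti₀ hgap0 (hdist z hz)
    have hb : ‖ζ - w‖⁻¹ ≤ (R' - R)⁻¹ := by
      apply inv_anti₀ hgap0 (hdist w hw)
    have hMM0 : 0 ≤ MM c R' := Real.sqrt_nonneg _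
    calc ‖(ζ - z)⁻¹ • f ζ - (ζ - w)⁻¹ • f ζ‖
        = ‖((ζ - z)⁻¹ - (ζ - w)⁻¹) * f ζ‖ := by
          rw [smul_eq_mul, smul_eq_mul, ← sub_mul]
      _ = ‖z - w‖ * (‖ζ - z‖⁻¹ * ‖ζ - w‖⁻¹) * ‖f ζ‖ := by
          rw [norm_mul, hkey, norm_mul, norm_mul, norm_inv, norm_inv]
      _ ≤ ‖z - w‖ * ((R' - R)⁻¹ * (R' - R)⁻¹) * MM c R' := by
          gcongr <;> positivity
      _ = MM c R' * ‖z - w‖ / ((R' - R) ^ 2) := by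
          rw [sq]
          field_simp
          try ring
  have hnle := circleIntegral.norm_integral_le_of_norm_le_const hR'0.le hbound
  rw [hsubint] at hnle
  have hlhs : ‖(2 * ↑π * Complex.I) • f z - (2 * ↑π * Complex.I) • f w‖
      = 2 * π * ‖f z - f w‖ := by
    rw [← smul_sub, norm_smul]
    congr 1
    simp [Complex.norm_exp, abs_of_pos Real.pi_pos]
  rw [hlhs] at hnle
  have hfinal : ‖f z - f w‖ ≤ R' * (MM c R' * ‖z - w‖ / ((R' - R) ^ 2)) := by
    have hpi : 0 < 2 * π := by positivity
    nlinarith [hnle]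
  calc ‖f z - f w‖ ≤ R' * (MM c R' * ‖z - w‖ / ((R' - R) ^ 2)) := hfinal
    _ = LL c R * ‖z - w‖ := by
        rw [LL, hgap, ← hR'def]
        ring

private lemma bker_lt_top (c : ℝ) (hc : 0 ≤ c) (t : ℂ) {z : ℂ} (hz : ‖z‖ < 1) :
    bker DD (wt c t) z < ⊤ := by
  rw [bker]
  refine lt_of_le_of_lt (iSup_le fun f => ?_)
    (ENNReal.ofReal_lt_top :
      ENNReal.ofReal (Real.exp (c + ‖t‖) / (π * ((1 - ‖z‖)/2) ^ 2)) < ⊤)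
  rw [enn_norm_sq]
  exact ENNReal.ofReal_le_ofReal (pointwise_bound c hc t f.2.1 f.2.2 hz)

instance adm_nonempty (c : ℝ) (t : ℂ) : Nonempty {f : ℂ → ℂ // DifferentiableOn ℂ f DD ∧
    (∫⁻ w in DD, ENNReal.ofReal (Real.exp (-(wt c t w))) * ((‖f w‖₊ : ℝ≥0∞)) ^ 2) ≤ 1} :=
  ⟨⟨fun _ => 0, differentiableOn_const 0, by simp⟩⟩

private lemma K0r_repr (c : ℝ) (z : ℂ) :
    (bker DD (wt c 0) z).toReal = ⨆ f : {f : ℂ → ℂ // DifferentiableOn ℂ f DD ∧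
      (∫⁻ w in DD, ENNReal.ofReal (Real.exp (-(wt c 0 w))) * ((‖f w‖₊ : ℝ≥0∞)) ^ 2) ≤ 1},
      ‖f.1 z‖ ^ 2 := by
  rw [bker, ENNReal.toReal_iSup (fun f => (by
    rw [enn_norm_sq]; exact ENNReal.ofReal_ne_top))]
  exact iSup_congr fun f => by rw [enn_norm_sq, ENNReal.toReal_ofReal (by positivity)]

private lemma K0r_bdd (c : ℝ) (hc : 0 ≤ c) {z : ℂ} (hz : ‖z‖ < 1) :
    BddAbove (Set.range fun f : {f : ℂ → ℂ // DifferentiableOn ℂ f DD ∧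
      (∫⁻ w in DD, ENNReal.ofReal (Real.exp (-(wt c 0 w))) * ((‖f w‖₊ : ℝ≥0∞)) ^ 2) ≤ 1} =>
      ‖f.1 z‖ ^ 2) := by
  refine ⟨Real.exp (c + ‖(0:ℂ)‖) / (π * ((1 - ‖z‖)/2) ^ 2), ?_⟩
  rintro x ⟨f, rfl⟩
  exact pointwise_bound c hc 0 f.2.1 f.2.2 hz

private lemma K0r_pos (c : ℝ) (hc : 0 ≤ c) {z : ℂ} (hz : ‖z‖ < 1) :
    0 < (bker DD (wt c 0) z).toReal :=
  ENNReal.toReal_pos (bker_pos c hc z).ne' (bker_lt_top c hc 0 hz).ne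

private lemma K_toReal (c : ℝ) (t z : ℂ) :
    (bker DD (wt c t) z).toReal
      = Real.exp ((t * z).re) * (bker DD (wt c 0) z).toReal := by
  rw [bker_transform, ENNReal.toReal_mul, ENNReal.toReal_ofReal (Real.exp_pos _).le]

private lemma log_K_eq (c : ℝ) (hc : 0 ≤ c) (t : ℂ) {z : ℂ} (hz : ‖z‖ < 1) :
    Real.log ((bker DD (wt c t) z).toReal)
      = (t * z).re + Real.log ((bker DD (wt c 0) z).toReal) := by
  rw [K_toReal, Real.log_mul (Real.exp_pos _).ne' (K0r_pos c hc hz).ne', Real.log_exp]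

private lemma K0r_contAt (c : ℝ) (hc : 0 ≤ c) {z₀ : ℂ} (hz₀ : ‖z₀‖ < 1) :
    ContinuousAt (fun z => (bker DD (wt c 0) z).toReal) z₀ := by
  set R : ℝ := (1 + ‖z₀‖)/2 with hRdef
  have hR0 : 0 ≤ R := by simp only [hRdef]; positivity
  have hR1 : R < 1 := by simp only [hRdef]; linarith
  have hmem : ‖z₀‖ < R := by simp only [hRdef]; linarith
  set C : ℝ := 2 * MM c R * LL c R with hCdef
  have hMM0 : 0 ≤ MM c R := Real.sqrt_nonneg _
  have hLL0 : 0 ≤ LL c R := by rw [LL, MM]; positivity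
  have hC0 : 0 ≤ C := by rw [hCdef]; positivity
  have key : ∀ z ∈ closedBall (0:ℂ) R, ∀ w ∈ closedBall (0:ℂ) R,
      (bker DD (wt c 0) z).toReal ≤ (bker DD (wt c 0) w).toReal + C * ‖z - w‖ := by
    intro z hz w hw
    rw [mem_closedBall, dist_zero_right] at hz hw
    have hz1 : ‖z‖ < 1 := lt_of_le_of_lt hz hR1
    have hw1 : ‖w‖ < 1 := lt_of_le_of_lt hw hR1
    rw [K0r_repr c z, K0r_repr c w]
    refine ciSup_le fun f => ?_
    have hfz : ‖f.1 z‖ ≤ MM c R := unif_bound c hc f.2.1 f.2.2 hR1 hz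
    have hfw : ‖f.1 w‖ ≤ MM c R := unif_bound c hc f.2.1 f.2.2 hR1 hw
    have hlip : ‖f.1 z - f.1 w‖ ≤ LL c R * ‖z - w‖ := lip_bound c hc f.2.1 f.2.2 hR0 hR1 hz hw
    have h1 : ‖f.1 z‖ - ‖f.1 w‖ ≤ LL c R * ‖z - w‖ :=
      (norm_sub_norm_le _ _).trans hlip
    have h2 : ‖f.1 z‖ ^ 2 ≤ ‖f.1 w‖ ^ 2 + C * ‖z - w‖ := by
      have hprod := mul_le_mul_of_nonneg_right h1
        (add_nonneg (norm_nonneg (f.1 z)) (norm_nonneg (f.1 w)))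
      have hsum : ‖f.1 z‖ + ‖f.1 w‖ ≤ 2 * MM c R := by linarith
      have hLd0 : 0 ≤ LL c R * ‖z - w‖ := mul_nonneg hLL0 (norm_nonneg _)
      have hprod2 : LL c R * ‖z - w‖ * (‖f.1 z‖ + ‖f.1 w‖)
          ≤ LL c R * ‖z - w‖ * (2 * MM c R) := by gcongr
      rw [hCdef]
      nlinarith [hprod, hprod2]
    calc ‖f.1 z‖ ^ 2 ≤ ‖f.1 w‖ ^ 2 + C * ‖z - w‖ := h2
      _ ≤ (⨆ g : {f : ℂ → ℂ // DifferentiableOn ℂ f DD ∧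
            (∫⁻ v in DD, ENNReal.ofReal (Real.exp (-(wt c 0 v))) * ((‖f v‖₊ : ℝ≥0∞)) ^ 2) ≤ 1},
            ‖g.1 w‖ ^ 2) + C * ‖z - w‖ := by
          gcongr
          exact le_ciSup (K0r_bdd c hc hw1) f
  have hlip : LipschitzOnWith C.toNNReal (fun z => (bker DD (wt c 0) z).toReal)
      (closedBall (0:ℂ) R) := by
    refine LipschitzOnWith.of_dist_le_mul fun z hz w hw => ?_
    rw [Real.dist_eq, Real.coe_toNNReal C hC0, dist_eq_norm]
    rw [abs_sub_le_iff]
    constructor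
    · linarith [key z hz w hw]
    · have := key w hw z hz
      rw [norm_sub_rev] at this
      linarith
  refine (hlip.continuousOn.continuousAt ?_)
  exact Filter.mem_of_superset (isOpen_ball.mem_nhds (by rwa [mem_ball, dist_zero_right]))
    ball_subset_closedBall

/-- **Berndtsson's theorem on the plurisubharmonic variation of Bergman
kernels (verifiable product special case).**  On `Ω × U` with `Ω = U = Δ` the
unit disk and the plurisubharmonic weight `φ(z,t) = c|z|² + Re(t z)` (`c > 0`),
let `K(z,t)` be the Bergman kernel of `A²(Ω, e^{-φ(·,t)})` on the diagonal.
Then `log K(z,t)` is plurisubharmonic in `(z,t)`; equivalently the metric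
`h_B = 1/K` on the (trivial) adjoint bundle has semipositive curvature
current. -/
theorem berndtsson_log_psh_special_case (c : ℝ) (hc : 0 < c) :
    PSHOn
      (fun p : ℂ × ℂ =>
        ((Real.log
          ((bker (Metric.ball (0 : ℂ) 1)
              (fun z : ℂ => c * ‖z‖ ^ 2 + (p.2 * z).re) p.1).toReal) : ℝ) : EReal))
      (Metric.ball (0 : ℂ) 1 ×ˢ Metric.ball (0 : ℂ) 1) := by
  have hc' : 0 ≤ c := hc.le
  have hKK : ∀ p : ℂ × ℂ, bker (Metric.ball (0 : ℂ) 1)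
      (fun z : ℂ => c * ‖z‖ ^ 2 + (p.2 * z).re) p.1 = bker DD (wt c p.2) p.1 := fun p => rfl
  constructor
  · -- upper semicontinuity (in fact continuity)
    refine ContinuousOn.upperSemicontinuousOn ?_
    refine continuous_coe_real_ereal.comp_continuousOn ?_
    intro p hp
    have hp1 : ‖p.1‖ < 1 := by
      have := hp.1
      rwa [mem_ball, dist_zero_right] at this
    refine ContinuousAt.continuousWithinAt ?_
    have hopen : IsOpen {q : ℂ × ℂ | ‖q.1‖ < 1} :=
      isOpen_lt (continuous_norm.comp continuous_fst) continuous_const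
    have heq : (fun q : ℂ × ℂ => Real.log
        ((bker (Metric.ball (0 : ℂ) 1)
          (fun z : ℂ => c * ‖z‖ ^ 2 + (q.2 * z).re) q.1).toReal))
        =ᶠ[nhds p] fun q : ℂ × ℂ =>
          (q.2 * q.1).re + Real.log ((bker DD (wt c 0) q.1).toReal) := by
      filter_upwards [hopen.mem_nhds hp1] with q hq
      rw [hKK q]
      exact log_K_eq c hc' q.2 hq
    rw [continuousAt_congr heq]
    refine ContinuousAt.add ?_ ?_
    · exact (Complex.continuous_re.comp (continuous_snd.mul continuous_fst)).continuousAt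
    · have h2 : ContinuousAt (fun q : ℂ × ℂ => (bker DD (wt c 0) q.1).toReal) p :=
        (K0r_contAt c hc' hp1).comp continuous_fst.continuousAt
      exact h2.log (K0r_pos c hc' hp1).ne'
  · -- maximum principle against harmonic majorants
    intro a b hab p hbd ζ hζ
    have hprod : ∀ ξ : ℂ, a + ξ • b = (a.1 + ξ * b.1, a.2 + ξ * b.2) := by
      intro ξ
      ext <;> simp
    have hmem : ∀ ξ : ℂ, ‖ξ‖ ≤ 1 → ‖a.1 + ξ * b.1‖ < 1 := by
      intro ξ hξ
      have h := (hab ξ hξ).1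
      rw [hprod ξ] at h
      rwa [mem_ball, dist_zero_right] at h
    have hbd' : ∀ ξ : ℂ, ‖ξ‖ = 1 →
        Real.exp (((a.2 + ξ * b.2) * (a.1 + ξ * b.1)).re) *
          (bker DD (wt c 0) (a.1 + ξ * b.1)).toReal ≤ Real.exp ((p.eval ξ).re) := by
      intro ξ hξ
      have h := hbd ξ hξ
      rw [hprod ξ] at h
      have h' : Real.log ((bker DD (wt c (a.2 + ξ * b.2)) (a.1 + ξ * b.1)).toReal)
          ≤ (p.eval ξ).re := EReal.coe_le_coe_iff.mp h
      have hpos : 0 < (bker DD (wt c (a.2 + ξ * b.2)) (a.1 + ξ * b.1)).toReal := by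
        rw [K_toReal]
        exact mul_pos (Real.exp_pos _) (K0r_pos c hc' (hmem ξ hξ.le))
      have h2 := (Real.log_le_iff_le_exp hpos).mp h'
      rwa [K_toReal] at h2
    have hallg : ∀ g : {f : ℂ → ℂ // DifferentiableOn ℂ f DD ∧
        (∫⁻ w in DD, ENNReal.ofReal (Real.exp (-(wt c 0 w))) * ((‖f w‖₊ : ℝ≥0∞)) ^ 2) ≤ 1},
        ‖g.1 (a.1 + ζ * b.1)‖ ^ 2 * Real.exp (((a.2 + ζ * b.2) * (a.1 + ζ * b.1)).re)
          ≤ Real.exp ((p.eval ζ).re) := by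
      intro g
      set H : ℂ → ℂ := fun ξ => (g.1 (a.1 + ξ * b.1))^2 *
        Complex.exp ((a.2 + ξ * b.2) * (a.1 + ξ * b.1) - p.eval ξ) with hH
      have hHnorm : ∀ ξ : ℂ, ‖H ξ‖ = ‖g.1 (a.1 + ξ * b.1)‖^2 *
          Real.exp ((((a.2 + ξ * b.2) * (a.1 + ξ * b.1)).re - (p.eval ξ).re)) := by
        intro ξ
        rw [hH]
        simp only
        rw [norm_mul, norm_pow, Complex.norm_exp,
          Complex.sub_re]
      have hVd : DifferentiableOn ℂ H {ξ : ℂ | ‖a.1 + ξ * b.1‖ < 1} := by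
        have haff : Differentiable ℂ (fun ξ : ℂ => a.1 + ξ * b.1) :=
          (differentiable_const _).add (differentiable_id.mul (differentiable_const _))
        have haff2 : Differentiable ℂ (fun ξ : ℂ => a.2 + ξ * b.2) :=
          (differentiable_const _).add (differentiable_id.mul (differentiable_const _))
        refine DifferentiableOn.mul ?_ ?_
        · refine DifferentiableOn.pow ?_ 2
          refine DifferentiableOn.comp (t := DD) g.2.1 haff.differentiableOn ?_
          intro ξ hξ
          rw [DD, mem_ball, dist_zero_right]
          exact hξ
        · refine Differentiable.differentiableOn ?_
          refine Complex.differentiable_exp.comp ?_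
          exact (haff2.mul haff).sub (Polynomial.differentiable p)
      have hsubV : closedBall (0:ℂ) 1 ⊆ {ξ : ℂ | ‖a.1 + ξ * b.1‖ < 1} := by
        intro ξ hξ
        rw [mem_closedBall, dist_zero_right] at hξ
        exact hmem ξ hξ
      have hdc : DiffContOnCl ℂ H (ball 0 1) :=
        ⟨hVd.mono (fun x hx => hsubV (ball_subset_closedBall hx)),
         (hVd.continuousOn).mono (fun x hx => hsubV (closure_ball_subset_closedBall hx))⟩
      have hfr : ∀ ξ ∈ frontier (ball (0:ℂ) 1), ‖H ξ‖ ≤ 1 := by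
        intro ξ hξ
        rw [frontier_ball (0:ℂ) one_ne_zero, mem_sphere, dist_zero_right] at hξ
        have hb1 := hbd' ξ hξ
        have hg_le : ‖g.1 (a.1 + ξ * b.1)‖^2 ≤ (bker DD (wt c 0) (a.1 + ξ * b.1)).toReal := by
          rw [K0r_repr]
          exact le_ciSup (K0r_bdd c hc' (hmem ξ hξ.le)) g
        rw [hHnorm ξ, Real.exp_sub]
        have hkey : ‖g.1 (a.1 + ξ * b.1)‖^2 *
            Real.exp (((a.2 + ξ * b.2) * (a.1 + ξ * b.1)).re) ≤ Real.exp ((p.eval ξ).re) := by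
          calc ‖g.1 (a.1 + ξ * b.1)‖^2 * Real.exp (((a.2 + ξ * b.2) * (a.1 + ξ * b.1)).re)
              ≤ (bker DD (wt c 0) (a.1 + ξ * b.1)).toReal *
                Real.exp (((a.2 + ξ * b.2) * (a.1 + ξ * b.1)).re) :=
                mul_le_mul_of_nonneg_right hg_le (Real.exp_pos _).le
            _ ≤ Real.exp ((p.eval ξ).re) := by linarith [hb1]
        rw [← mul_div_assoc, div_le_one (Real.exp_pos _)]
        exact hkey
      have hmax := Complex.norm_le_of_forall_mem_frontier_norm_le isBounded_ball hdc hfr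
        (by rw [closure_ball (0:ℂ) one_ne_zero, mem_closedBall, dist_zero_right]; exact hζ)
      rw [hHnorm ζ, Real.exp_sub, ← mul_div_assoc, div_le_one (Real.exp_pos _)] at hmax
      exact hmax
    have hK0le : (bker DD (wt c 0) (a.1 + ζ * b.1)).toReal *
        Real.exp (((a.2 + ζ * b.2) * (a.1 + ζ * b.1)).re) ≤ Real.exp ((p.eval ζ).re) := by
      rw [← le_div_iff₀ (Real.exp_pos _)]
      rw [K0r_repr]
      haveI := adm_nonempty c 0
      refine ciSup_le fun g => ?_
      rw [le_div_iff₀ (Real.exp_pos _)]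
      exact hallg g
    have hpos2 : 0 < (bker DD (wt c (a.2 + ζ * b.2)) (a.1 + ζ * b.1)).toReal := by
      rw [K_toReal]
      exact mul_pos (Real.exp_pos _) (K0r_pos c hc' (hmem ζ hζ))
    have hfinal : (bker DD (wt c (a.2 + ζ * b.2)) (a.1 + ζ * b.1)).toReal
        ≤ Real.exp ((p.eval ζ).re) := by
      rw [K_toReal]
      linarith [hK0le]
    rw [hprod ζ]
    refine EReal.coe_le_coe_iff.mpr ?_
    show Real.log ((bker DD (wt c (a.2 + ζ * b.2)) (a.1 + ζ * b.1)).toReal) ≤ (p.eval ζ).re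
    rw [Real.log_le_iff_le_exp hpos2]
    exact hfinal

end BerndtssonAux
end
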